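/- Let q : ℤ → ℝ be a bounded sequence and h ∈ ℓ¹(ℤ) with decomposition h = h_T + h_{T^C} for T ⊂ ℤ. Suppose q[k] = sgn(h_T[k]) for all k ∈ T with h_T[k] ≠ 0, |q[k]| ≤ 1 for all k ∈ T, and |q[k]| ≤ ρ < 1 for all k ∉ T. Then |∑_{k ∈ ℤ} q[k] h[k]| ≥ ‖h_T‖₁ − ρ ‖h_{T^C}‖₁. -/

import Mathlib

/-! On `T` the certificate `q` is the sign of `h`, so `∑_{k ∈ T} q[k] h[k] = ‖h_T‖₁` exactly, while
off `T` the bound `|q| ≤ ρ` gives `|∑_{k ∉ T} q[k] h[k]| ≤ ρ ‖h_{Tᶜ}‖₁`; the reverse triangle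
inequality combines the two. -/

open Set

theorem Real.sign_mul_self_eq_abs (r : ℝ) : Real.sign r * r = |r| := by
  rcases lt_trichotomy r 0 with hr | rfl | hr
  · rw [Real.sign_of_neg hr, abs_of_neg hr, neg_one_mul]
  · simp
  · rw [Real.sign_of_pos hr, abs_of_pos hr, one_mul]

section Pairing

variable {ι : Type*} {q g : ι → ℝ} {s : Set ι} {ρ : ℝ}

theorem mul_indicator_eq_abs_indicator
    (hsgn : ∀ k ∈ s, g k ≠ 0 → q k = Real.sign (g k)) (k : ι) :
    q k * s.indicator g k = |s.indicator g k| := by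
  by_cases hk : k ∈ s
  · by_cases hg : g k = 0
    · simp [hk, hg]
    · rw [indicator_of_mem hk, hsgn k hk hg, Real.sign_mul_self_eq_abs]
  · simp [hk]

theorem abs_mul_indicator_le (hq : ∀ k ∈ s, |q k| ≤ ρ) (k : ι) :
    |q k * s.indicator g k| ≤ ρ * |s.indicator g k| := by
  by_cases hk : k ∈ s
  · rw [abs_mul]
    exact mul_le_mul_of_nonneg_right (hq k hk) (abs_nonneg _)
  · simp [hk]

theorem summable_mul_indicator (hg : Summable fun k => |g k|) (hq : ∀ k ∈ s, |q k| ≤ ρ) :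
    Summable fun k => q k * s.indicator g k :=
  ((hg.of_abs.indicator s).abs.mul_left ρ).of_norm_bounded (abs_mul_indicator_le hq)

theorem abs_tsum_mul_indicator_le (hg : Summable fun k => |g k|) (hq : ∀ k ∈ s, |q k| ≤ ρ) :
    |∑' k, q k * s.indicator g k| ≤ ρ * ∑' k, |s.indicator g k| := by
  have hsumm := (summable_mul_indicator hg hq).abs
  calc |∑' k, q k * s.indicator g k|
      ≤ ∑' k, |q k * s.indicator g k| :=
        norm_tsum_le_tsum_norm (f := fun k => q k * s.indicator g k) hsumm
    _ ≤ ∑' k, ρ * |s.indicator g k| :=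
      hsumm.tsum_le_tsum (abs_mul_indicator_le hq) ((hg.of_abs.indicator s).abs.mul_left ρ)
    _ = ρ * ∑' k, |s.indicator g k| := tsum_mul_left

end Pairing

theorem dual_certificate_pairing_lower_bound_general (q h : ℤ → ℝ) (T : Set ℤ) (ρ : ℝ)
    (hh : Summable fun k => |h k|)
    (hsgn : ∀ k ∈ T, h k ≠ 0 → q k = Real.sign (h k))
    (hqTc : ∀ k ∉ T, |q k| ≤ ρ) :
    |∑' k : ℤ, q k * h k| ≥
      (∑' k : ℤ, |T.indicator h k|) - ρ * ∑' k : ℤ, |Tᶜ.indicator h k| := by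
  have hT : (fun k => q k * T.indicator h k) = fun k => |T.indicator h k| :=
    funext (mul_indicator_eq_abs_indicator hsgn)
  have hsplit : ∑' k, q k * h k =
      ∑' k, |T.indicator h k| + ∑' k, q k * Tᶜ.indicator h k := by
    rw [← hT, ← Summable.tsum_add (by rw [hT]; exact (hh.of_abs.indicator T).abs)
      (summable_mul_indicator (s := Tᶜ) hh hqTc)]
    simp only [← mul_add, indicator_self_add_compl_apply]
  have hTc := abs_tsum_mul_indicator_le (s := Tᶜ) hh hqTc
  rw [hsplit, ge_iff_le]
  linarith [neg_abs_le (∑' k, q k * Tᶜ.indicator h k),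
    le_abs_self (∑' k, |T.indicator h k| + ∑' k, q k * Tᶜ.indicator h k)]

theorem dual_certificate_pairing_lower_bound (q h : ℤ → ℝ) (T : Set ℤ) (ρ : ℝ)
    (hρ : ρ < 1) (hh : Summable fun k => |h k|)
    (hqT : ∀ k ∈ T, |q k| ≤ 1)
    (hsgn : ∀ k ∈ T, h k ≠ 0 → q k = Real.sign (h k))
    (hqTc : ∀ k ∉ T, |q k| ≤ ρ) :
    |∑' k : ℤ, q k * h k| ≥
      (∑' k : ℤ, |T.indicator h k|) - ρ * ∑' k : ℤ, |Tᶜ.indicator h k| :=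
  dual_certificate_pairing_lower_bound_general q h T ρ hh hsgn hqTc
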